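/- Let y be uniform on {±1} and, conditionally on y, let x ~ N(yμ, σ²I_d) for μ ∈ R^d and σ > 0. For w ∈ R^d with w ≠ 0 and ε ≥ 0, the ℓ∞-robust classification error at radius ε of the linear classifier f_w(x) = sgn(wᵀx) — i.e. the probability that there exists u with ‖u − x‖_∞ ≤ ε and y·wᵀu ≤ 0 — equals Q( (μᵀw − ε‖w‖₁)/(σ‖w‖₂) ), where Q(t) = (1/√(2π))∫_t^∞ e^{−s²/2} ds is the standard Gaussian upper tail function. -/

import Mathlib

open MeasureTheory ProbabilityTheory

noncomputable section

/-- Euclidean (ℓ²) norm on `Fin d → ℝ`. -/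
def nrm2 {d : ℕ} (x : Fin d → ℝ) : ℝ := Real.sqrt (∑ i, (x i) ^ 2)

/-- Euclidean inner product on `Fin d → ℝ`. -/
def ip {d : ℕ} (x y : Fin d → ℝ) : ℝ := ∑ i, x i * y i

/-- ℓ¹ norm on `Fin d → ℝ`. -/
def nrm1 {d : ℕ} (x : Fin d → ℝ) : ℝ := ∑ i, |x i|

/-- ℓ∞ norm on `Fin d → ℝ`. -/
def nrmInf {d : ℕ} (x : Fin d → ℝ) : ℝ := ⨆ i, |x i|

/-- Gaussian measure `N(μ, σ² I)` on `Fin s → ℝ`. -/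
def gaussPi {s : ℕ} (μ : Fin s → ℝ) (σ : ℝ) : Measure (Fin s → ℝ) :=
  Measure.pi fun i => gaussianReal (μ i) ⟨σ ^ 2, sq_nonneg σ⟩

/-- Labeled Gaussian model: `y` uniform on `{±1}` and `x | y ~ N(yμ, σ²I)`. -/
def gaussLabeled {d : ℕ} (μ : Fin d → ℝ) (σ : ℝ) : Measure ((Fin d → ℝ) × ℝ) :=
  (1 / 2 : ENNReal) • ((gaussPi μ σ).map fun x => (x, (1 : ℝ))) +
  (1 / 2 : ENNReal) • ((gaussPi (-μ) σ).map fun x => (x, (-1 : ℝ)))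

/-- The standard Gaussian upper tail function `Q(t) = (1/√(2π)) ∫_t^∞ e^{-s²/2} ds`. -/
def gaussQ (t : ℝ) : ℝ :=
  (Real.sqrt (2 * Real.pi))⁻¹ * ∫ s in Set.Ioi t, Real.exp (-s ^ 2 / 2)

/-!
Against a point `(x, y)` the adversary's best move is `u = x - ε sign(y) sign(w)`, which lowers
the margin `y wᵀx` by exactly `ε ‖w‖₁` (ℓ¹/ℓ∞ duality), so the robust error is the event
`y wᵀx ≤ ε ‖w‖₁`. Given either label, `y wᵀx` is a linear image of an isotropic Gaussian, hence
`N(μᵀw, σ² ‖w‖₂²)` (compare characteristic functions), and its lower tail at `ε ‖w‖₁` is the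
stated value of `Q`.
-/

open scoped NNReal ENNReal

lemma ip_comm {d : ℕ} (x y : Fin d → ℝ) : ip x y = ip y x := dotProduct_comm x y

lemma ip_sub_right {d : ℕ} (w x y : Fin d → ℝ) : ip w (x - y) = ip w x - ip w y :=
  dotProduct_sub w x y

lemma ip_smul_right {d : ℕ} (c : ℝ) (w x : Fin d → ℝ) : ip w (c • x) = c * ip w x :=
  dotProduct_smul c w x

lemma ip_smul_left {d : ℕ} (c : ℝ) (w x : Fin d → ℝ) : ip (c • w) x = c * ip w x :=
  smul_dotProduct c w x

lemma measurable_ip {d : ℕ} (w : Fin d → ℝ) : Measurable (ip w) := by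
  unfold ip; fun_prop

lemma nrm1_nonneg {d : ℕ} (w : Fin d → ℝ) : 0 ≤ nrm1 w :=
  Finset.sum_nonneg fun i _ => abs_nonneg (w i)

lemma nrm2_pos {d : ℕ} {w : Fin d → ℝ} (hw : w ≠ 0) : 0 < nrm2 w := by
  obtain ⟨i, hi⟩ := Function.ne_iff.1 hw
  exact Real.sqrt_pos.2 <|
    Finset.sum_pos' (fun j _ => sq_nonneg (w j)) ⟨i, Finset.mem_univ i, sq_pos_of_ne_zero hi⟩

lemma abs_le_nrmInf {d : ℕ} (x : Fin d → ℝ) (i : Fin d) : |x i| ≤ nrmInf x :=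
  le_ciSup (f := fun j => |x j|) (Set.finite_range _).bddAbove i

lemma abs_ip_le_nrm1_mul_nrmInf {d : ℕ} (w v : Fin d → ℝ) : |ip w v| ≤ nrm1 w * nrmInf v :=
  calc |ip w v| ≤ ∑ i, |w i| * |v i| := by
        rw [ip]
        simpa only [abs_mul] using Finset.abs_sum_le_sum_abs (fun i => w i * v i) Finset.univ
    _ ≤ ∑ i, |w i| * nrmInf v := by gcongr with i; exact abs_le_nrmInf v i
    _ = nrm1 w * nrmInf v := by rw [nrm1, Finset.sum_mul]

lemma ip_sign_eq_nrm1 {d : ℕ} (w : Fin d → ℝ) :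
    ip w (fun i => (SignType.sign (w i) : ℝ)) = nrm1 w :=
  Finset.sum_congr rfl fun i _ => self_mul_sign (w i)

theorem exists_nrmInf_sub_le_and_mul_ip_nonpos_iff {d : ℕ} (w x : Fin d → ℝ) (y : ℝ) {ε : ℝ}
    (hε : 0 ≤ ε) :
    (∃ u, nrmInf (u - x) ≤ ε ∧ y * ip w u ≤ 0) ↔ y * ip w x ≤ ε * |y| * nrm1 w := by
  constructor
  · rintro ⟨u, hux, hu⟩
    calc y * ip w x = y * ip w u - y * ip w (u - x) := by rw [ip_sub_right]; ring
      _ ≤ |y * ip w (u - x)| := by linarith [neg_abs_le (y * ip w (u - x))]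
      _ = |y| * |ip w (u - x)| := abs_mul _ _
      _ ≤ |y| * (nrm1 w * ε) := by
          gcongr
          exact (abs_ip_le_nrm1_mul_nrmInf w _).trans (by gcongr; exact nrm1_nonneg w)
      _ = ε * |y| * nrm1 w := by ring
  · intro h
    have hsign : ∀ r : ℝ, |(SignType.sign r : ℝ)| ≤ 1 := fun r => by
      rcases SignType.sign r with _ | _ | _ <;> simp
    set s : Fin d → ℝ := fun i => (SignType.sign (w i) : ℝ)
    refine ⟨x - (ε * SignType.sign y) • s, Real.iSup_le (fun i => ?_) hε, ?_⟩
    · simp only [sub_sub_cancel_left, Pi.neg_apply, Pi.smul_apply, smul_eq_mul, abs_neg, abs_mul,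
        abs_of_nonneg hε]
      calc ε * |(SignType.sign y : ℝ)| * |s i| ≤ ε * 1 * 1 := by
            gcongr
            exacts [hsign y, hsign (w i)]
        _ = ε := by ring
    · rw [ip_sub_right, ip_smul_right, ip_sign_eq_nrm1, mul_sub, ← mul_assoc y, mul_left_comm y,
        self_mul_sign]
      linarith

lemma pi_gaussianReal_map_sum_mul {ι : Type*} [Fintype ι] (m : ι → ℝ) (v : ι → ℝ≥0)
    (w : ι → ℝ) :
    (Measure.pi fun i => gaussianReal (m i) (v i)).map (fun x => ∑ i, w i * x i)
      = gaussianReal (∑ i, w i * m i) (∑ i, ‖w i‖₊ ^ 2 * v i) := by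
  have hscale : (Measure.pi fun i => gaussianReal (m i) (v i)).map (fun x i => w i * x i)
      = Measure.pi fun i => gaussianReal (w i * m i) (‖w i‖₊ ^ 2 * v i) := by
    rw [Measure.pi_map_pi fun i => by fun_prop]
    congr 1; ext1 i
    rw [gaussianReal_map_const_mul]
    congr 2; ext; simp
  rw [show (fun x : ι → ℝ => ∑ i, w i * x i) = (fun p => ∑ i, p i) ∘ (fun x i => w i * x i)
      from rfl, ← Measure.map_map (by fun_prop) (by fun_prop), hscale]
  refine Measure.ext_of_charFun (funext fun t => ?_)
  rw [charFun_map_sum_pi_eq_prod, Finset.prod_apply]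
  simp only [charFun_gaussianReal, ← Complex.exp_sum]
  push_cast
  simp only [Finset.mul_sum, Finset.sum_mul, Finset.sum_div, ← Finset.sum_sub_distrib]

lemma gaussPi_map_ip {d : ℕ} (μ : Fin d → ℝ) (σ : ℝ) (w : Fin d → ℝ) :
    (gaussPi μ σ).map (ip w) = gaussianReal (ip w μ) ((σ * nrm2 w) ^ 2).toNNReal := by
  refine (pi_gaussianReal_map_sum_mul μ _ w).trans ?_
  congr 1
  ext
  rw [Real.coe_toNNReal _ (by positivity), mul_pow, nrm2, Real.sq_sqrt (by positivity),
    NNReal.coe_sum, Finset.mul_sum]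
  refine Finset.sum_congr rfl fun i _ => ?_
  show (‖w i‖₊ : ℝ) ^ 2 * σ ^ 2 = _
  rw [coe_nnnorm, Real.norm_eq_abs, sq_abs, mul_comm]

lemma gaussQ_eq_gaussianReal_Ici (t : ℝ) : gaussQ t = (gaussianReal 0 1).real (Set.Ici t) := by
  rw [measureReal_def, gaussianReal_apply_eq_integral _ one_ne_zero,
    ENNReal.toReal_ofReal (setIntegral_nonneg measurableSet_Ici
      fun x _ => gaussianPDFReal_nonneg _ _ _),
    gaussQ, ← integral_Ici_eq_integral_Ioi, ← integral_const_mul]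
  simp [gaussianPDFReal]

lemma gaussianReal_Iic_eq_gaussQ (m a : ℝ) {v : ℝ≥0} (hv : v ≠ 0) :
    (gaussianReal m v).real (Set.Iic a) = gaussQ ((m - a) / √v) := by
  have hmap : gaussianReal m v = (gaussianReal 0 1).map (fun s => m - √v * s) := by
    rw [show (fun s => m - √v * s) = (m - ·) ∘ (√v * ·) from rfl,
      ← Measure.map_map (by fun_prop) (by fun_prop), gaussianReal_map_const_mul,
      gaussianReal_map_const_sub]
    congr 1
    · simp
    · ext; simp
  have hpre : (fun s => m - √v * s) ⁻¹' Set.Iic a = Set.Ici ((m - a) / √v) := by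
    ext s
    have : 0 < √(v : ℝ) := by positivity
    simp only [Set.mem_preimage, Set.mem_Iic, Set.mem_Ici, div_le_iff₀ this]
    constructor <;> intro h <;> linarith
  rw [gaussQ_eq_gaussianReal_Ici, hmap, map_measureReal_apply (by fun_prop) measurableSet_Iic,
    hpre]

lemma gaussPi_smul_apply_setOf_mul_ip_le {d : ℕ} (μ w : Fin d → ℝ) (σ : ℝ) {y : ℝ}
    (hy : |y| = 1) (a : ℝ) :
    gaussPi (y • μ) σ {x | y * ip w x ≤ a}
      = gaussianReal (ip w μ) ((σ * nrm2 w) ^ 2).toNNReal (Set.Iic a) := by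
  have hy2 : y ^ 2 = 1 := by rw [← sq_abs, hy, one_pow]
  have hset : {x | y * ip w x ≤ a} = ip (y • w) ⁻¹' Set.Iic a := by
    ext x
    simp [ip_smul_left]
  have hmean : ip (y • w) (y • μ) = ip w μ := by
    rw [ip_smul_left, ip_smul_right, ← mul_assoc, ← sq, hy2, one_mul]
  have hnrm2 : nrm2 (y • w) = nrm2 w := by
    simp only [nrm2, Pi.smul_apply, smul_eq_mul, mul_pow, hy2, one_mul]
  rw [hset, ← Measure.map_apply (measurable_ip _) measurableSet_Iic, gaussPi_map_ip, hmean, hnrm2]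

lemma gaussLabeled_apply_of_forall_abs_eq_one {d : ℕ} {μ : Fin d → ℝ} {σ : ℝ}
    {S : Set ((Fin d → ℝ) × ℝ)} {p : ℝ≥0∞}
    (h : ∀ y : ℝ, |y| = 1 → gaussPi (y • μ) σ ((fun x => (x, y)) ⁻¹' S) = p) :
    gaussLabeled μ σ S = p := by
  have hpos := h 1 abs_one
  have hneg := h (-1) (by rw [abs_neg, abs_one])
  rw [one_smul] at hpos
  rw [neg_one_smul] at hneg
  rw [gaussLabeled, Measure.add_apply, Measure.smul_apply, Measure.smul_apply,
    (measurableEmbedding_prod_mk_right _).map_apply,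
    (measurableEmbedding_prod_mk_right _).map_apply, hpos, hneg, ← add_smul, ENNReal.add_halves,
    one_smul]

/-- exact formula for the ℓ∞-robust error of a linear classifier on a
symmetric Gaussian mixture. -/
theorem robust_error_of_linear_classifier_gaussian
    {d : ℕ} (μ : Fin d → ℝ) (σ : ℝ) (hσ : 0 < σ)
    (w : Fin d → ℝ) (hw : w ≠ 0) (ε : ℝ) (hε : 0 ≤ ε) :
    ((gaussLabeled μ σ)
        {p | ∃ u, nrmInf (u - p.1) ≤ ε ∧ p.2 * ip w u ≤ 0}).toReal
      = gaussQ ((ip μ w - ε * nrm1 w) / (σ * nrm2 w)) := by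
  have hc : 0 < σ * nrm2 w := mul_pos hσ (nrm2_pos hw)
  have hslice : ∀ y : ℝ, |y| = 1 →
      (fun x => (x, y)) ⁻¹' {p : (Fin d → ℝ) × ℝ | ∃ u, nrmInf (u - p.1) ≤ ε ∧ p.2 * ip w u ≤ 0}
        = {x | y * ip w x ≤ ε * nrm1 w} := fun y hy => by
    ext x
    simpa [hy] using exists_nrmInf_sub_le_and_mul_ip_nonpos_iff w x y hε
  rw [gaussLabeled_apply_of_forall_abs_eq_one fun y hy => by
      rw [hslice y hy, gaussPi_smul_apply_setOf_mul_ip_le μ w σ hy],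
    ← measureReal_def, gaussianReal_Iic_eq_gaussQ _ _ (by positivity),
    Real.coe_toNNReal _ (sq_nonneg _), Real.sqrt_sq hc.le, ip_comm]
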